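/- Suppose ψ and φ are two nonnegative, periodic Lipschitz functions on ℝ^d such that {x : ψ(x) = 0} ⊆ {x : φ(x) = 0}. Then there exists a Lipschitz continuous function θ : [0,∞) → [0,∞) with θ(0) = 0, θ(s) > 0 for s > 0, and θ'(s) > 0 for almost every s > 0, such that θ(φ(x)) ≤ ψ(x) for all x ∈ ℝ^d. -/

import Mathlib

open MeasureTheory

lemma theta_aux (g : ℝ → ℝ) (hg : Monotone g) (hg0 : ∀ t, 0 ≤ g t)
    (hg1 : ∀ t, g t ≤ 1) (hgpos : ∀ t, 0 < t → 0 < g t) :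
    ∃ θ : ℝ → ℝ,
      (∃ K : NNReal, LipschitzOnWith K θ (Set.Ici 0)) ∧
      (∀ s, 0 ≤ s → 0 ≤ θ s) ∧
      θ 0 = 0 ∧
      (∀ s, 0 < s → 0 < θ s) ∧
      (∀ᵐ s ∂(volume.restrict (Set.Ioi (0:ℝ))), ∃ d' > (0:ℝ), HasDerivAt θ d' s) ∧
      (∀ s, 0 ≤ s → θ s ≤ s * g s) := by
  set θ : ℝ → ℝ := fun s => ∫ t in (0:ℝ)..s, g t with hθ
  have hint : ∀ a b : ℝ, IntervalIntegrable g volume a b := fun a b =>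
    hg.intervalIntegrable
  have hub : ∀ a b : ℝ, a ≤ b → θ b - θ a ≤ (b - a) * g b := by
    intro a b hab
    have h1 : θ b - θ a = ∫ t in a..b, g t := by
      rw [hθ]; simp only
      rw [← intervalIntegral.integral_add_adjacent_intervals (hint 0 a) (hint a b)]
      ring_nf
    rw [h1]
    calc (∫ t in a..b, g t) ≤ ∫ t in a..b, g b :=
          intervalIntegral.integral_mono_on hab (hint a b)
            (intervalIntegrable_const) (fun t ht => hg ht.2)
      _ = (b - a) * g b := by simp [mul_comm]
  have hlb : ∀ a b : ℝ, a ≤ b → (b - a) * g a ≤ θ b - θ a := by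
    intro a b hab
    have h1 : θ b - θ a = ∫ t in a..b, g t := by
      rw [hθ]; simp only
      rw [← intervalIntegral.integral_add_adjacent_intervals (hint 0 a) (hint a b)]
      ring_nf
    rw [h1]
    calc (b - a) * g a = ∫ t in a..b, g a := by simp [mul_comm]
      _ ≤ ∫ t in a..b, g t :=
          intervalIntegral.integral_mono_on hab intervalIntegrable_const
            (hint a b) (fun t ht => hg ht.1)
  have hmono : Monotone θ := by
    intro a b hab
    nlinarith [hlb a b hab, hg0 a]
  refine ⟨θ, ⟨1, ?_⟩, ?_, ?_, ?_, ?_, ?_⟩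
  · intro a ha b hb
    rw [edist_dist, edist_dist, Real.dist_eq, Real.dist_eq]
    rcases le_total b a with h | h
    · have h1 := hub b a h
      have h2 := hlb b a h
      have : |θ a - θ b| ≤ |a - b| := by
        rw [abs_of_nonneg (by linarith [hmono h]), abs_of_nonneg (by linarith)]
        nlinarith [hg1 a, hg0 b]
      simpa using ENNReal.ofReal_le_ofReal this
    · have h1 := hub a b h
      have h2 := hlb a b h
      have : |θ a - θ b| ≤ |a - b| := by
        rw [abs_sub_comm, abs_sub_comm a b]
        rw [abs_of_nonneg (by linarith [hmono h]), abs_of_nonneg (by linarith)]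
        nlinarith [hg1 b, hg0 a]
      simpa using ENNReal.ofReal_le_ofReal this
  · intro s hs
    have := hlb 0 s hs
    have h0 : θ 0 = 0 := by simp [hθ]
    nlinarith [hg0 0]
  · simp [hθ]
  · intro s hs
    have h1 := hlb (s/2) s (by linarith)
    have h2 : 0 ≤ θ (s/2) := by
      have := hlb 0 (s/2) (by linarith)
      have h0 : θ 0 = 0 := by simp [hθ]
      nlinarith [hg0 0]
    have h3 := hgpos (s/2) (by linarith)
    nlinarith
  · have hcount : Set.Countable {t | ¬ ContinuousAt g t} := hg.countable_not_continuousAt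
    have hae : ∀ᵐ s ∂(volume.restrict (Set.Ioi (0:ℝ))), ContinuousAt g s := by
      have := hcount.ae_notMem (μ := volume)
      have h2 : ∀ᵐ s ∂volume, ContinuousAt g s := by
        filter_upwards [this] with s hs
        simpa using hs
      exact ae_restrict_of_ae h2
    have hmem : ∀ᵐ s ∂(volume.restrict (Set.Ioi (0:ℝ))), s ∈ Set.Ioi (0:ℝ) :=
      ae_restrict_mem measurableSet_Ioi
    filter_upwards [hae, hmem] with s hs hsmem
    refine ⟨g s, hgpos s hsmem, ?_⟩
    exact intervalIntegral.integral_hasDerivAt_right (hint 0 s)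
      hg.measurable.aestronglyMeasurable.stronglyMeasurableAtFilter hs
  · intro s hs
    have := hub 0 s hs
    have h0 : θ 0 = 0 := by simp [hθ]
    nlinarith

lemma stmt7_aux_g {d : ℕ} (ψ φ : EuclideanSpace ℝ (Fin d) → ℝ)
    (hψ0 : ∀ x, 0 ≤ ψ x) (hφ0 : ∀ x, 0 ≤ φ x)
    (hψlip : ∃ K : NNReal, LipschitzWith K ψ)
    (hφlip : ∃ K : NNReal, LipschitzWith K φ)
    (hψper : ∀ x, ∀ k : Fin d → ℤ,
      ψ (x + (show EuclideanSpace ℝ (Fin d) from WithLp.toLp 2 (fun i => (k i : ℝ)))) = ψ x)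
    (hφper : ∀ x, ∀ k : Fin d → ℤ,
      φ (x + (show EuclideanSpace ℝ (Fin d) from WithLp.toLp 2 (fun i => (k i : ℝ)))) = φ x)
    (hzero : {x | ψ x = 0} ⊆ {x | φ x = 0}) :
    ∃ M : ℝ, ∃ g : ℝ → ℝ, 0 ≤ M ∧ Monotone g ∧ (∀ t, 0 ≤ g t) ∧ (∀ t, g t ≤ 1) ∧
      (∀ t, 0 < t → 0 < g t) ∧ (∀ x, φ x * g (φ x) ≤ ψ x) := by
  obtain ⟨Kψ, hψl⟩ := hψlip
  obtain ⟨Kφ, hφl⟩ := hφlip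
  have hψc : Continuous ψ := hψl.continuous
  have hφc : Continuous φ := hφl.continuous
  set C : Set (EuclideanSpace ℝ (Fin d)) := {x | ∀ i, x i ∈ Set.Icc (0:ℝ) 1} with hCdef
  have hCcomp : IsCompact C := by
    have : C = (EuclideanSpace.equiv (Fin d) ℝ) ⁻¹' (Set.univ.pi fun _ => Set.Icc (0:ℝ) 1) := by
      ext x
      simp only [hCdef, Set.mem_setOf_eq, Set.mem_preimage, Set.mem_pi, Set.mem_univ,
        forall_true_left]
      rfl
    rw [this]
    exact (EuclideanSpace.equiv (Fin d) ℝ).toHomeomorph.isCompact_preimage.mpr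
      (isCompact_univ_pi fun _ => isCompact_Icc)
  have hC0 : (0 : EuclideanSpace ℝ (Fin d)) ∈ C := by
    intro i; constructor <;> simp
  -- periodic reduction
  have hred : ∀ x, ∃ y ∈ C, ψ y = ψ x ∧ φ y = φ x := by
    intro x
    refine ⟨(show EuclideanSpace ℝ (Fin d) from WithLp.toLp 2 (fun i => Int.fract (x i))), ?_, ?_, ?_⟩
    · intro i
      exact ⟨(Int.fract_nonneg _), le_of_lt (Int.fract_lt_one _)⟩
    · have := hψper (show EuclideanSpace ℝ (Fin d) from WithLp.toLp 2 (fun i => Int.fract (x i)))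
        (fun i => ⌊x i⌋)
      rw [← this]
      congr 1
      ext i
      show Int.fract (x i) + (⌊x i⌋ : ℝ) = x i
      rw [Int.fract]; ring
    · have := hφper (show EuclideanSpace ℝ (Fin d) from WithLp.toLp 2 (fun i => Int.fract (x i)))
        (fun i => ⌊x i⌋)
      rw [← this]
      congr 1
      ext i
      show Int.fract (x i) + (⌊x i⌋ : ℝ) = x i
      rw [Int.fract]; ring
  obtain ⟨xM, hxMC, hxM'⟩ := hCcomp.exists_isMaxOn ⟨0, hC0⟩ hφc.continuousOn
  have hxM : ∀ y ∈ C, φ y ≤ φ xM := fun y hy => isMaxOn_iff.mp hxM' y hy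
  set M := φ xM with hMdef
  have hM0 : 0 ≤ M := hφ0 xM
  have hMbound : ∀ x, φ x ≤ M := by
    intro x
    obtain ⟨y, hyC, _, hyφ⟩ := hred x
    rw [← hyφ]; exact hxM y hyC
  set m : ℝ → ℝ := fun t => sInf (insert 1 (ψ '' {x ∈ C | t ≤ φ x})) with hmdef
  have hbdd : ∀ t, BddBelow (insert 1 (ψ '' {x ∈ C | t ≤ φ x})) := by
    intro t
    refine ⟨0, fun b hb => ?_⟩
    rcases hb with h | ⟨x, _, rfl⟩
    · rw [h]; norm_num
    · exact hψ0 x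
  have hmnonneg : ∀ t, 0 ≤ m t := by
    intro t
    refine le_csInf ⟨1, Set.mem_insert _ _⟩ fun b hb => ?_
    rcases hb with h | ⟨x, _, rfl⟩
    · rw [h]; norm_num
    · exact hψ0 x
  have hmmono : Monotone m := by
    intro t t' h
    refine csInf_le_csInf (hbdd t) ⟨1, Set.mem_insert _ _⟩ ?_
    intro b hb
    rcases hb with hb | ⟨x, ⟨hxC, hxφ⟩, rfl⟩
    · exact Or.inl hb
    · exact Or.inr ⟨x, ⟨hxC, le_trans h hxφ⟩, rfl⟩
  have hmle : ∀ x, m (φ x) ≤ ψ x := by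
    intro x
    obtain ⟨y, hyC, hyψ, hyφ⟩ := hred x
    rw [← hyψ]
    exact csInf_le (hbdd _) (Set.mem_insert_of_mem _ ⟨y, ⟨hyC, hyφ.ge⟩, rfl⟩)
  have hmpos : ∀ t, 0 < t → 0 < m t := by
    intro t ht
    rcases Set.eq_empty_or_nonempty {x ∈ C | t ≤ φ x} with h | h
    · rw [hmdef]; simp only [h, Set.image_empty, insert_empty_eq, csInf_singleton]
      norm_num
    · have hScomp : IsCompact {x ∈ C | t ≤ φ x} := by
        have : {x ∈ C | t ≤ φ x} = C ∩ φ ⁻¹' (Set.Ici t) := rfl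
        rw [this]
        exact hCcomp.inter_right (isClosed_Ici.preimage hφc)
      obtain ⟨x₀, hx₀S, hx₀min'⟩ := hScomp.exists_isMinOn h hψc.continuousOn
      have hx₀min : ∀ z ∈ {x ∈ C | t ≤ φ x}, ψ x₀ ≤ ψ z := fun z hz => isMinOn_iff.mp hx₀min' z hz
      have hψx₀ : 0 < ψ x₀ := by
        rcases lt_or_eq_of_le (hψ0 x₀) with h' | h'
        · exact h'
        · exfalso
          have := hzero h'.symm
          have : φ x₀ = 0 := this
          linarith [hx₀S.2]
      have : min 1 (ψ x₀) ≤ m t := by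
        refine le_csInf ⟨1, Set.mem_insert _ _⟩ fun b hb => ?_
        rcases hb with hb | ⟨x, hxS, rfl⟩
        · rw [hb]; exact min_le_left _ _
        · exact le_trans (min_le_right _ _) (hx₀min x hxS)
      have : 0 < min 1 (ψ x₀) := lt_min one_pos hψx₀
      linarith
  refine ⟨M, fun t => min 1 (m t / (M + 1)), hM0, ?_, ?_, ?_, ?_, ?_⟩
  · intro t t' h
    exact min_le_min le_rfl (div_le_div_of_nonneg_right (hmmono h) (by linarith))
  · intro t
    exact le_min one_pos.le (div_nonneg (hmnonneg t) (by linarith))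
  · intro t; exact min_le_left _ _
  · intro t ht
    exact lt_min one_pos (div_pos (hmpos t ht) (by linarith))
  · intro x
    have h1 : min 1 (m (φ x) / (M + 1)) ≤ m (φ x) / (M + 1) := min_le_right _ _
    have h2 : m (φ x) ≤ ψ x := hmle x
    have h3 : φ x ≤ M := hMbound x
    have h4 := hφ0 x
    have h5 := hmnonneg (φ x)
    have hM1 : (0:ℝ) < M + 1 := by linarith
    have : φ x * min 1 (m (φ x) / (M + 1)) ≤ φ x * (m (φ x) / (M + 1)) :=
      mul_le_mul_of_nonneg_left h1 h4
    have h6 : φ x * (m (φ x) / (M + 1)) ≤ m (φ x) := by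
      calc φ x * (m (φ x) / (M + 1)) ≤ (M + 1) * (m (φ x) / (M + 1)) :=
            mul_le_mul_of_nonneg_right (by linarith) (div_nonneg h5 hM1.le)
        _ = m (φ x) := by field_simp
    linarith

/-- Lemma on ordered Lipschitz functions: if `ψ`, `φ` are nonnegative periodic Lipschitz
functions with `{ψ = 0} ⊆ {φ = 0}`, there is a Lipschitz `θ : [0,∞) → [0,∞)` with `θ(0) = 0`,
`θ > 0` on `(0,∞)`, `θ' > 0` a.e., and `θ ∘ φ ≤ ψ`. -/
theorem stmt7 {d : ℕ} (ψ φ : EuclideanSpace ℝ (Fin d) → ℝ)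
    (hψ0 : ∀ x, 0 ≤ ψ x) (hφ0 : ∀ x, 0 ≤ φ x)
    (hψlip : ∃ K : NNReal, LipschitzWith K ψ)
    (hφlip : ∃ K : NNReal, LipschitzWith K φ)
    (hψper : ∀ x, ∀ k : Fin d → ℤ,
      ψ (x + (show EuclideanSpace ℝ (Fin d) from WithLp.toLp 2 (fun i => (k i : ℝ)))) = ψ x)
    (hφper : ∀ x, ∀ k : Fin d → ℤ,
      φ (x + (show EuclideanSpace ℝ (Fin d) from WithLp.toLp 2 (fun i => (k i : ℝ)))) = φ x)
    (hzero : {x | ψ x = 0} ⊆ {x | φ x = 0}) :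
    ∃ θ : ℝ → ℝ,
      (∃ K : NNReal, LipschitzOnWith K θ (Set.Ici 0)) ∧
      (∀ s, 0 ≤ s → 0 ≤ θ s) ∧
      θ 0 = 0 ∧
      (∀ s, 0 < s → 0 < θ s) ∧
      (∀ᵐ s ∂(volume.restrict (Set.Ioi (0:ℝ))), ∃ d' > (0:ℝ), HasDerivAt θ d' s) ∧
      ∀ x, θ (φ x) ≤ ψ x := by
  obtain ⟨M, g, hM0, hgmono, hg0, hg1, hgpos, hgle⟩ :=
    stmt7_aux_g ψ φ hψ0 hφ0 hψlip hφlip hψper hφper hzero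
  obtain ⟨θ, h1, h2, h3, h4, h5, h6⟩ := theta_aux g hgmono hg0 hg1 hgpos
  exact ⟨θ, h1, h2, h3, h4, h5, fun x => le_trans (h6 (φ x) (hφ0 x)) (hgle x)⟩
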